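/- Let τ = 0 (cold plasma) and μ > 0. Then the solvability condition of Theorem 1, namely (m μ²/2)(1 - e^{-μ²/2})² - e^{μ²/2} + μ² + 1 > 0 with m = 0, reduces to μ² + 1 > e^{μ²/2}; this inequality holds for μ² < 2·W-type root, in particular it holds for all 0 < μ ≤ 1.5 and fails for μ = 1.6. -/
import Mathlib

lemma exp_lt_aux : Real.exp (9/8 : ℝ) < 13/4 := by
  have h1 : Real.exp 1 < 2.7182818286 := Real.exp_one_lt_d9
  have h2 : Real.exp (1/8 : ℝ) < 8/7 := by
    have := Real.one_sub_lt_exp_neg (x := (1/8 : ℝ)) (by norm_num)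
    have hpos := Real.exp_pos (-(1/8 : ℝ))
    rw [Real.exp_neg] at this hpos
    have h8 : (0:ℝ) < Real.exp (1/8) := Real.exp_pos _
    rw [lt_inv_comm₀ (by norm_num) h8] at this
    linarith
  have : Real.exp (9/8 : ℝ) = Real.exp 1 * Real.exp (1/8) := by
    rw [← Real.exp_add]; norm_num
  rw [this]
  nlinarith [Real.exp_pos (1/8 : ℝ), (Real.exp_pos 1)]

lemma key (x : ℝ) (hx : 0 < x) (hx' : x ≤ 9/8) : Real.exp x < 1 + 2 * x := by
  have t : x = (1 - 8*x/9) * 0 + (8*x/9) * (9/8) := by ring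
  have hc := convexOn_exp.2 (Set.mem_univ (0:ℝ)) (Set.mem_univ (9/8 : ℝ))
    (show (0:ℝ) ≤ 1 - 8*x/9 by linarith) (show (0:ℝ) ≤ 8*x/9 by linarith)
    (by ring)
  simp only [smul_eq_mul, ← t] at hc
  rw [Real.exp_zero] at hc
  have h9 := exp_lt_aux
  nlinarith

theorem cold_plasma_solvability_condition :
    (∀ μ : ℝ, 0 < μ →
      ((0 : ℝ) * μ ^ 2 / 2 * (1 - Real.exp (-(μ ^ 2) / 2)) ^ 2
          - Real.exp (μ ^ 2 / 2) + μ ^ 2 + 1 > 0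
        ↔ μ ^ 2 + 1 > Real.exp (μ ^ 2 / 2))) ∧
    (∀ μ : ℝ, 0 < μ → μ ≤ 1.5 → μ ^ 2 + 1 > Real.exp (μ ^ 2 / 2)) ∧
    ¬ ((1.6 : ℝ) ^ 2 + 1 > Real.exp ((1.6 : ℝ) ^ 2 / 2)) := by
  refine ⟨fun μ hμ => by constructor <;> intro h <;> nlinarith, fun μ hμ hμ' => ?_, ?_⟩
  · have h := key (μ^2/2) (by positivity) (by nlinarith)
    nlinarith
  · push_neg
    have h : ((1.6:ℝ)^2/2) = 1.28 := by norm_num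
    rw [h]
    have := Real.sum_le_exp_of_nonneg (x := (1.28:ℝ)) (by norm_num) 6
    calc (1.6:ℝ)^2 + 1 ≤ (∑ i ∈ Finset.range 6, (1.28:ℝ) ^ i / (Nat.factorial i : ℝ)) := by
          simp [Finset.sum_range_succ, Nat.factorial]; norm_num
      _ ≤ Real.exp 1.28 := this
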